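/- Suppose R(X_E, X_F) ≤ 1 − c for some c > 0, with (X_E, X_F) full rank and all columns centred. Then there exists a constant C > 0 depending only on c such that ‖T_{Y:E.F} − T_{Y:E}‖_∞ ≤ C σ⁻¹ ‖Y‖₂ {R(X_E, X_F) + R(Y, X_F)} and ‖T_{Y:E.F} − T_{Ỹ:E}‖_∞ ≤ C σ⁻¹ ‖Ỹ‖₂ R(X_E, X_F), where Ỹ = (I − P_F)Y. -/

import Mathlib

open Matrix

noncomputable def specNorm {m n : Type*} [Fintype m] [Fintype n] [DecidableEq n]
    (M : Matrix m n ℝ) : ℝ :=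
  ‖(Matrix.toEuclideanLin M).toContinuousLinearMap‖

noncomputable def proj {n : ℕ} {m : Type*} [Fintype m] [DecidableEq m]
    (X : Matrix (Fin n) m ℝ) : Matrix (Fin n) (Fin n) ℝ :=
  X * (Xᵀ * X)⁻¹ * Xᵀ

noncomputable def nrm {m : Type*} [Fintype m] (v : m → ℝ) : ℝ :=
  Real.sqrt (∑ i, (v i)^2)

/-!
By Frisch–Waugh–Lovell, the `E`-block of the joint regression is the regression of `Y` on the
residualised design `H = (I - P_F) X_E`, which only sees `Ỹ = (I - P_F) Y`. A Wald statistic of a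
design `X` is `σ⁻¹ ⟪d_X, y⟫ / ‖d_X‖` for the dual column `d_X = X (XᵀX)⁻¹ eⱼ`, characterised by
`⟪X u, d_X⟫ = u j`. As `Hᵀ Ỹ = X_Eᵀ Ỹ`, we get `T_{Y:E.F} - T_{Ỹ:E} = σ⁻¹ ⟪p, Ỹ⟫` with
`p = X_E (HᵀH)⁻¹ eⱼ / ‖d_H‖ - d_E / ‖d_E‖`. From `‖P_F X_E v‖ ≤ R ‖X_E v‖`, `R = ‖P_E P_F‖`, the
Gram matrices satisfy `(1 - R²) X_EᵀX_E ≤ HᵀH ≤ X_EᵀX_E`; expanding `‖p‖²` with the dual-column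
identities then gives `‖p‖² ≤ R² / (1 - R²) ≤ R² / c`. Replacing `Ỹ` by `Y` in the marginal
statistic costs at most `σ⁻¹ ‖P_F Y‖`.
-/

section EuclideanNorm

variable {ι ι' : Type*} [Fintype ι] [Fintype ι']

lemma nrm_nonneg (v : ι → ℝ) : 0 ≤ nrm v := Real.sqrt_nonneg _

lemma nrm_sq (v : ι → ℝ) : nrm v ^ 2 = v ⬝ᵥ v := by
  rw [nrm, Real.sq_sqrt (Finset.sum_nonneg fun i _ => sq_nonneg _)]
  simp [dotProduct, sq]

lemma nrm_eq_zero {v : ι → ℝ} : nrm v = 0 ↔ v = 0 := by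
  rw [← dotProduct_self_eq_zero, ← nrm_sq, pow_eq_zero_iff two_ne_zero]

lemma nrm_eq_norm_toLp (v : ι → ℝ) : nrm v = ‖WithLp.toLp 2 v‖ := by
  simp [EuclideanSpace.norm_eq, nrm]

lemma abs_dotProduct_le_nrm_mul_nrm (x y : ι → ℝ) : |x ⬝ᵥ y| ≤ nrm x * nrm y := by
  have h := abs_real_inner_le_norm (WithLp.toLp 2 y : EuclideanSpace ℝ ι) (WithLp.toLp 2 x)
  rwa [EuclideanSpace.inner_toLp_toLp, star_trivial, ← nrm_eq_norm_toLp, ← nrm_eq_norm_toLp,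
    mul_comm] at h

open scoped Matrix.Norms.L2Operator in
lemma specNorm_eq_l2_opNorm [DecidableEq ι'] (M : Matrix ι ι' ℝ) : specNorm M = ‖M‖ := rfl

lemma specNorm_nonneg [DecidableEq ι'] (M : Matrix ι ι' ℝ) : 0 ≤ specNorm M := norm_nonneg _

open scoped Matrix.Norms.L2Operator in
lemma nrm_mulVec_le [DecidableEq ι'] (M : Matrix ι ι' ℝ) (v : ι' → ℝ) :
    nrm (M *ᵥ v) ≤ specNorm M * nrm v := by
  rw [nrm_eq_norm_toLp, nrm_eq_norm_toLp, specNorm_eq_l2_opNorm]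
  exact M.l2_opNorm_mulVec (WithLp.toLp 2 v)

open scoped Matrix.Norms.L2Operator in
lemma specNorm_transpose [DecidableEq ι] [DecidableEq ι'] (M : Matrix ι ι' ℝ) :
    specNorm Mᵀ = specNorm M := by
  rw [specNorm_eq_l2_opNorm, specNorm_eq_l2_opNorm, ← conjTranspose_eq_transpose_of_trivial,
    l2_opNorm_conjTranspose]

end EuclideanNorm

section DualColumns

variable {ι m : Type*} [Fintype ι] [Fintype m] [DecidableEq m] {X : Matrix ι m ℝ}

lemma isUnit_det_transpose_mul_self (hX : Function.Injective X.mulVec) :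
    IsUnit (Xᵀ * X).det := by
  rw [← isUnit_iff_isUnit_det, ← conjTranspose_eq_transpose_of_trivial]
  exact (PosDef.conjTranspose_mul_self X hX).isUnit

omit [DecidableEq m] in
lemma mulVec_dotProduct_mulVec (X : Matrix ι m ℝ) (u w : m → ℝ) :
    (X *ᵥ u) ⬝ᵥ (X *ᵥ w) = u ⬝ᵥ ((Xᵀ * X) *ᵥ w) := by
  rw [← mulVec_mulVec, dotProduct_transpose_mulVec, dotProduct_comm]

/-- The residual of the `j`-th column of `X` on the other columns, scaled to have inner product
`1` with that column. -/
noncomputable def dualCol (X : Matrix ι m ℝ) (j : m) : ι → ℝ :=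
  X *ᵥ ((Xᵀ * X)⁻¹ *ᵥ Pi.single j 1)

/-- The paper's `T_{y:X}`, the `j`-th Wald statistic of the regression of `y` on `X`. -/
noncomputable def waldStat (X : Matrix ι m ℝ) (σ : ℝ) (y : ι → ℝ) (j : m) : ℝ :=
  σ⁻¹ * ((Xᵀ * X)⁻¹ *ᵥ (Xᵀ *ᵥ y)) j / √((Xᵀ * X)⁻¹ j j)

lemma mulVec_dotProduct_dualCol (hX : Function.Injective X.mulVec) (u : m → ℝ) (j : m) :
    (X *ᵥ u) ⬝ᵥ dualCol X j = u j := by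
  rw [dualCol, mulVec_dotProduct_mulVec, mulVec_mulVec,
    mul_nonsing_inv _ (isUnit_det_transpose_mul_self hX), one_mulVec, dotProduct_single, mul_one]

lemma eq_dualCol_of_forall_dotProduct (hX : Function.Injective X.mulVec) {j : m} {w : m → ℝ}
    (h : ∀ u, (X *ᵥ u) ⬝ᵥ (X *ᵥ w) = u j) : X *ᵥ w = dualCol X j := by
  have hw : (Xᵀ * X) *ᵥ w = Pi.single j 1 := by
    ext i
    have hi := h (Pi.single i 1)
    rw [mulVec_dotProduct_mulVec, single_dotProduct, one_mul] at hi
    simp [hi, Pi.single_apply, eq_comm]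
  rw [dualCol, ← hw, mulVec_mulVec w,
    nonsing_inv_mul _ (isUnit_det_transpose_mul_self hX), one_mulVec]

variable (X) in
lemma dualCol_dotProduct (y : ι → ℝ) (j : m) :
    dualCol X j ⬝ᵥ y = ((Xᵀ * X)⁻¹ *ᵥ (Xᵀ *ᵥ y)) j := by
  have hsymm : ((Xᵀ * X)⁻¹)ᵀ = (Xᵀ * X)⁻¹ := by
    rw [transpose_nonsing_inv, transpose_mul, transpose_transpose]
  calc dualCol X j ⬝ᵥ y = y ⬝ᵥ (X *ᵥ ((Xᵀ * X)⁻¹ *ᵥ Pi.single j 1)) := dotProduct_comm _ _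
    _ = Pi.single j 1 ⬝ᵥ ((Xᵀ * X)⁻¹ᵀ *ᵥ (Xᵀ *ᵥ y)) := by
      rw [dotProduct_transpose_mulVec, dotProduct_comm (Xᵀ *ᵥ y), dotProduct_transpose_mulVec]
    _ = ((Xᵀ * X)⁻¹ *ᵥ (Xᵀ *ᵥ y)) j := by rw [hsymm, single_dotProduct, one_mul]

lemma nrm_dualCol_sq (hX : Function.Injective X.mulVec) (j : m) :
    nrm (dualCol X j) ^ 2 = (Xᵀ * X)⁻¹ j j := by
  rw [nrm_sq]
  nth_rewrite 1 [dualCol]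
  rw [mulVec_dotProduct_dualCol hX, mulVec_single_one, col_apply]

lemma waldStat_eq (hX : Function.Injective X.mulVec) (σ : ℝ) (y : ι → ℝ) (j : m) :
    waldStat X σ y j = σ⁻¹ * (dualCol X j ⬝ᵥ y) / nrm (dualCol X j) := by
  rw [waldStat, dualCol_dotProduct, ← nrm_dualCol_sq hX, Real.sqrt_sq (nrm_nonneg _)]

variable (X) in
lemma waldStat_sub (σ : ℝ) (y y' : ι → ℝ) (j : m) :
    waldStat X σ y j - waldStat X σ y' j = waldStat X σ (y - y') j := by
  simp only [waldStat, mulVec_sub, Pi.sub_apply]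
  ring

lemma abs_waldStat_le (hX : Function.Injective X.mulVec) (σ : ℝ) (y : ι → ℝ) (j : m) :
    |waldStat X σ y j| ≤ |σ⁻¹| * nrm y := by
  rw [waldStat_eq hX, mul_div_assoc, abs_mul, abs_div, abs_of_nonneg (nrm_nonneg _)]
  gcongr
  exact div_le_of_le_mul₀ (nrm_nonneg _) (nrm_nonneg _)
    ((abs_dotProduct_le_nrm_mul_nrm _ _).trans_eq (mul_comm _ _))

end DualColumns

-- In the application `dH`, `dG` are the dual columns of `H`, `G` and
-- `x = G (HᵀH)⁻¹ eⱼ`, `y = H (GᵀG)⁻¹ eⱼ`.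
lemma mul_nrm_inv_smul_sub_inv_smul_sq_le {ι : Type*} [Fintype ι] {x dH y dG : ι → ℝ} {κ : ℝ}
    (hκ : 0 ≤ κ) (hxG : x ⬝ᵥ dG = nrm dH ^ 2) (hyH : y ⬝ᵥ dH = nrm dG ^ 2)
    (hx : κ * nrm x ^ 2 ≤ nrm dH ^ 2) (hy : nrm y ≤ nrm dG) (hG : dG ≠ 0) :
    κ * nrm ((nrm dH)⁻¹ • x - (nrm dG)⁻¹ • dG) ^ 2 ≤ 1 - κ := by
  have hG' : 0 < nrm dG := (nrm_nonneg dG).lt_of_ne' (nrm_eq_zero.not.mpr hG)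
  have hGH : nrm dG ≤ nrm dH := by
    have := (le_abs_self _).trans (abs_dotProduct_le_nrm_mul_nrm y dH)
    nlinarith [nrm_nonneg y, nrm_nonneg dH]
  have hH : 0 < nrm dH := hG'.trans_le hGH
  have hexp : nrm ((nrm dH)⁻¹ • x - (nrm dG)⁻¹ • dG) ^ 2
      = nrm x ^ 2 / nrm dH ^ 2 - 2 * (nrm dH / nrm dG) + 1 := by
    simp only [nrm_sq, dotProduct_sub, sub_dotProduct, dotProduct_smul, smul_dotProduct,
      smul_eq_mul, dotProduct_comm dG x, hxG]
    simp only [← nrm_sq]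
    field_simp
    ring
  have hx' : κ * (nrm x ^ 2 / nrm dH ^ 2) ≤ 1 := by
    rw [← mul_div_assoc]
    exact div_le_one_of_le₀ hx (sq_nonneg _)
  have hHG : 1 ≤ nrm dH / nrm dG := (one_le_div hG').mpr hGH
  rw [hexp]
  nlinarith

lemma injective_mulVec_of_mul_nrm_sq_le {ι m : Type*} [Fintype ι] [Fintype m]
    {G H : Matrix ι m ℝ} {κ : ℝ} (hG : Function.Injective G.mulVec) (hκ : 0 < κ)
    (hlow : ∀ v, κ * nrm (G *ᵥ v) ^ 2 ≤ nrm (H *ᵥ v) ^ 2) : Function.Injective H.mulVec := by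
  refine fun v w hvw => hG ?_
  have h0 := hlow (v - w)
  rw [mulVec_sub H, hvw, sub_self, nrm_eq_zero.mpr rfl] at h0
  have h1 : nrm (G *ᵥ (v - w)) ^ 2 ≤ 0 := by nlinarith
  rw [← sub_eq_zero, ← mulVec_sub, ← nrm_eq_zero, ← sq_eq_zero_iff]
  exact le_antisymm h1 (sq_nonneg _)

theorem sq_waldStat_sub_waldStat_le {ι m : Type*} [Fintype ι] [Fintype m] [DecidableEq m]
    {G H : Matrix ι m ℝ} {κ : ℝ} (hG : Function.Injective G.mulVec) (hκ : 0 < κ)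
    (hlow : ∀ v, κ * nrm (G *ᵥ v) ^ 2 ≤ nrm (H *ᵥ v) ^ 2)
    (hup : ∀ v, nrm (H *ᵥ v) ≤ nrm (G *ᵥ v)) {y : ι → ℝ} (hy : Hᵀ *ᵥ y = Gᵀ *ᵥ y)
    (σ : ℝ) (j : m) :
    κ * (waldStat H σ y j - waldStat G σ y j) ^ 2 ≤ (1 - κ) * (σ⁻¹ * nrm y) ^ 2 := by
  have hH := injective_mulVec_of_mul_nrm_sq_le hG hκ hlow
  set s := (Hᵀ * H)⁻¹ *ᵥ Pi.single j 1
  set t := (Gᵀ * G)⁻¹ *ᵥ Pi.single j 1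
  set p := (nrm (dualCol H j))⁻¹ • (G *ᵥ s) - (nrm (dualCol G j))⁻¹ • dualCol G j
  have hHG : dualCol H j ⬝ᵥ y = (G *ᵥ s) ⬝ᵥ y := by
    rw [dualCol, dotProduct_comm, ← dotProduct_transpose_mulVec, hy, dotProduct_transpose_mulVec,
      dotProduct_comm]
  have hdiff : waldStat H σ y j - waldStat G σ y j = σ⁻¹ * (p ⬝ᵥ y) := by
    rw [waldStat_eq hH, waldStat_eq hG, hHG, sub_dotProduct, smul_dotProduct, smul_dotProduct,
      smul_eq_mul, smul_eq_mul]
    ring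
  have hp : κ * nrm p ^ 2 ≤ 1 - κ := by
    refine mul_nrm_inv_smul_sub_inv_smul_sq_le (y := H *ᵥ t) hκ.le ?_ ?_ (hlow s) (hup t) ?_
    · rw [mulVec_dotProduct_dualCol hG, nrm_dualCol_sq hH]
      simp [s]
    · rw [mulVec_dotProduct_dualCol hH, nrm_dualCol_sq hG]
      simp [t]
    · intro h0
      simpa [h0] using mulVec_dotProduct_dualCol hG (Pi.single j 1) j
  have hCS : (p ⬝ᵥ y) ^ 2 ≤ nrm p ^ 2 * nrm y ^ 2 := by
    rw [← sq_abs, ← mul_pow]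
    exact pow_le_pow_left₀ (abs_nonneg _) (abs_dotProduct_le_nrm_mul_nrm p y) 2
  calc κ * (waldStat H σ y j - waldStat G σ y j) ^ 2
      ≤ κ * (σ⁻¹ ^ 2 * (nrm p ^ 2 * nrm y ^ 2)) := by rw [hdiff, mul_pow]; gcongr
    _ = κ * nrm p ^ 2 * (σ⁻¹ * nrm y) ^ 2 := by ring
    _ ≤ (1 - κ) * (σ⁻¹ * nrm y) ^ 2 := by gcongr

section SymmetricIdempotent

variable {ι : Type*} [Fintype ι] [DecidableEq ι] {Q : Matrix ι ι ℝ}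

omit [DecidableEq ι] in
lemma dotProduct_mulVec_eq_mulVec_dotProduct_mulVec (hQs : Q.IsSymm) (hQi : IsIdempotentElem Q)
    (x y : ι → ℝ) : x ⬝ᵥ (Q *ᵥ y) = (Q *ᵥ x) ⬝ᵥ (Q *ᵥ y) := by
  calc x ⬝ᵥ (Q *ᵥ y) = x ⬝ᵥ (Qᵀ *ᵥ (Q *ᵥ y)) := by rw [hQs.eq, mulVec_mulVec, hQi.eq]
    _ = (Q *ᵥ x) ⬝ᵥ (Q *ᵥ y) := by rw [dotProduct_transpose_mulVec, dotProduct_comm]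

lemma nrm_sq_eq_nrm_mulVec_sq_add (hQs : Q.IsSymm) (hQi : IsIdempotentElem Q) (x : ι → ℝ) :
    nrm x ^ 2 = nrm (Q *ᵥ x) ^ 2 + nrm ((1 - Q) *ᵥ x) ^ 2 := by
  have h := dotProduct_mulVec_eq_mulVec_dotProduct_mulVec hQs hQi x x
  simp only [nrm_sq, sub_mulVec, one_mulVec, dotProduct_sub, sub_dotProduct,
    dotProduct_comm (Q *ᵥ x) x]
  linarith

lemma nrm_one_sub_mulVec_le (hQs : Q.IsSymm) (hQi : IsIdempotentElem Q) (x : ι → ℝ) :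
    nrm ((1 - Q) *ᵥ x) ≤ nrm x := by
  have h := nrm_sq_eq_nrm_mulVec_sq_add hQs hQi x
  nlinarith [nrm_nonneg x, nrm_nonneg (Q *ᵥ x), nrm_nonneg ((1 - Q) *ᵥ x)]

end SymmetricIdempotent

section Projection

variable {n : ℕ} {m : Type*} [Fintype m] [DecidableEq m] (X : Matrix (Fin n) m ℝ)

lemma isSymm_proj : (proj X).IsSymm := by
  simp only [IsSymm, proj, transpose_mul, transpose_transpose, transpose_nonsing_inv,
    Matrix.mul_assoc]

variable {X}

lemma proj_mul_self (hX : Function.Injective X.mulVec) : proj X * X = X := by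
  simp only [proj, Matrix.mul_assoc]
  rw [nonsing_inv_mul _ (isUnit_det_transpose_mul_self hX), Matrix.mul_one]

lemma isIdempotentElem_proj (hX : Function.Injective X.mulVec) : IsIdempotentElem (proj X) := by
  rw [IsIdempotentElem]
  nth_rewrite 2 [proj]
  simp only [← Matrix.mul_assoc, proj_mul_self hX]
  rfl

end Projection

lemma injective_mulVec_of_rank_eq_card {K p q : Type*} [Field K] [Fintype p] [Fintype q]
    {A : Matrix p q K} (h : A.rank = Fintype.card q) : Function.Injective A.mulVec := by
  have hsum := LinearMap.finrank_range_add_finrank_ker A.mulVecLin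
  rw [← rank, h, Module.finrank_fintype_fun_eq_card, add_eq_left,
    Submodule.finrank_eq_zero] at hsum
  exact LinearMap.ker_eq_bot.mp hsum

lemma injective_mulVec_of_fromCols {R ι m k : Type*} [Semiring R] [Fintype m] [Fintype k]
    {A : Matrix ι m R} {B : Matrix ι k R} (hAB : Function.Injective (fromCols A B).mulVec) :
    Function.Injective A.mulVec ∧ Function.Injective B.mulVec := by
  constructor
  · intro v w hvw
    have := @hAB (Sum.elim v 0) (Sum.elim w 0) (by simp [hvw])
    simpa using congrArg (· ∘ Sum.inl) this
  · intro v w hvw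
    have := @hAB (Sum.elim 0 v) (Sum.elim 0 w) (by simp [hvw])
    simpa using congrArg (· ∘ Sum.inr) this

section FrischWaughLovell

variable {n : ℕ} {m k : Type*} [Fintype m] [Fintype k] [DecidableEq k]
  {XE : Matrix (Fin n) m ℝ} {XF : Matrix (Fin n) k ℝ}

variable (XE XF) in
lemma residual_mulVec_eq_fromCols_mulVec (v : m → ℝ) :
    ((1 - proj XF) * XE) *ᵥ v =
      fromCols XE XF *ᵥ Sum.elim v (-((XFᵀ * XF)⁻¹ *ᵥ (XFᵀ *ᵥ (XE *ᵥ v)))) := by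
  rw [fromCols_mulVec_sumElim, Matrix.sub_mul, Matrix.one_mul, sub_mulVec, mulVec_neg,
    sub_eq_add_neg]
  simp only [proj, mulVec_mulVec, Matrix.mul_assoc]

omit [Fintype m] in
variable (XE XF) in
lemma transpose_residual_mulVec (y : Fin n → ℝ) :
    ((1 - proj XF) * XE)ᵀ *ᵥ y = XEᵀ *ᵥ ((1 - proj XF) *ᵥ y) := by
  rw [transpose_mul, (isSymm_one.sub (isSymm_proj XF)).eq, mulVec_mulVec]

lemma injective_mulVec_residual (hK : Function.Injective (fromCols XE XF).mulVec) :
    Function.Injective ((1 - proj XF) * XE).mulVec := by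
  intro v w hvw
  rw [residual_mulVec_eq_fromCols_mulVec, residual_mulVec_eq_fromCols_mulVec] at hvw
  simpa using congrArg (· ∘ Sum.inl) (hK hvw)

variable [DecidableEq m]

theorem dualCol_fromCols_inl (hK : Function.Injective (fromCols XE XF).mulVec) (j : m) :
    dualCol (fromCols XE XF) (Sum.inl j) = dualCol ((1 - proj XF) * XE) j := by
  have hF := (injective_mulVec_of_fromCols hK).2
  have hH := injective_mulVec_residual hK
  have hQs : (1 - proj XF).IsSymm := isSymm_one.sub (isSymm_proj XF)
  have hQi : IsIdempotentElem (1 - proj XF) := (isIdempotentElem_proj hF).one_sub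
  have hQF : (1 - proj XF) * XF = 0 := by
    rw [Matrix.sub_mul, Matrix.one_mul, proj_mul_self hF, sub_self]
  set s := (((1 - proj XF) * XE)ᵀ * ((1 - proj XF) * XE))⁻¹ *ᵥ Pi.single j 1
  have hs : dualCol ((1 - proj XF) * XE) j = (1 - proj XF) *ᵥ (XE *ᵥ s) := by
    rw [dualCol, ← mulVec_mulVec]
  have hw : dualCol ((1 - proj XF) * XE) j =
      fromCols XE XF *ᵥ Sum.elim s (-((XFᵀ * XF)⁻¹ *ᵥ (XFᵀ *ᵥ (XE *ᵥ s)))) := by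
    rw [dualCol, residual_mulVec_eq_fromCols_mulVec]
  refine (hw.trans (eq_dualCol_of_forall_dotProduct hK fun u => ?_)).symm
  rw [← hw, fromCols_mulVec, add_dotProduct, hs,
    dotProduct_mulVec_eq_mulVec_dotProduct_mulVec hQs hQi (XE *ᵥ _),
    dotProduct_mulVec_eq_mulVec_dotProduct_mulVec hQs hQi (XF *ᵥ _)]
  simp only [mulVec_mulVec, hQF, zero_mulVec, zero_dotProduct, add_zero]
  exact mulVec_dotProduct_dualCol hH (u ∘ Sum.inl) j

theorem waldStat_fromCols_inl (hK : Function.Injective (fromCols XE XF).mulVec) (σ : ℝ)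
    (y : Fin n → ℝ) (j : m) :
    waldStat (fromCols XE XF) σ y (Sum.inl j) = waldStat ((1 - proj XF) * XE) σ y j := by
  rw [waldStat_eq hK, waldStat_eq (injective_mulVec_residual hK), dualCol_fromCols_inl hK]

end FrischWaughLovell

section Approximation

variable {n : ℕ} {m k : Type*} [Fintype m] [Fintype k] [DecidableEq m] [DecidableEq k]
  {XE : Matrix (Fin n) m ℝ} {XF : Matrix (Fin n) k ℝ}

lemma one_sub_sq_mul_nrm_sq_le_nrm_residual_sq (hE : Function.Injective XE.mulVec)
    (hF : Function.Injective XF.mulVec) (v : m → ℝ) :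
    (1 - specNorm (proj XE * proj XF) ^ 2) * nrm (XE *ᵥ v) ^ 2 ≤
      nrm (((1 - proj XF) * XE) *ᵥ v) ^ 2 := by
  have hPF : nrm (proj XF *ᵥ (XE *ᵥ v)) ≤ specNorm (proj XE * proj XF) * nrm (XE *ᵥ v) := by
    rw [← specNorm_transpose, transpose_mul, (isSymm_proj XE).eq, (isSymm_proj XF).eq]
    calc nrm (proj XF *ᵥ (XE *ᵥ v)) = nrm ((proj XF * proj XE) *ᵥ (XE *ᵥ v)) := by
          rw [← mulVec_mulVec, mulVec_mulVec v (proj XE), proj_mul_self hE]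
      _ ≤ _ := nrm_mulVec_le _ _
  have h := nrm_sq_eq_nrm_mulVec_sq_add (isSymm_proj XF) (isIdempotentElem_proj hF) (XE *ᵥ v)
  rw [← mulVec_mulVec]
  nlinarith [pow_le_pow_left₀ (nrm_nonneg _) hPF 2]

theorem abs_waldStat_fromCols_sub_waldStat_residual_le
    (hK : Function.Injective (fromCols XE XF).mulVec) {c : ℝ} (hc : 0 < c)
    (hR : specNorm (proj XE * proj XF) ≤ 1 - c) {σ : ℝ} (hσ : 0 < σ) (Y : Fin n → ℝ) (j : m) :
    |waldStat (fromCols XE XF) σ Y (Sum.inl j) - waldStat XE σ ((1 - proj XF) *ᵥ Y) j| ≤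
      (√c)⁻¹ * σ⁻¹ * nrm ((1 - proj XF) *ᵥ Y) * specNorm (proj XE * proj XF) := by
  obtain ⟨hE, hF⟩ := injective_mulVec_of_fromCols hK
  set R := specNorm (proj XE * proj XF)
  set z := (1 - proj XF) *ᵥ Y
  set Δ := waldStat ((1 - proj XF) * XE) σ z j - waldStat XE σ z j
  have hQs : (1 - proj XF).IsSymm := isSymm_one.sub (isSymm_proj XF)
  have hQi : IsIdempotentElem (1 - proj XF) := (isIdempotentElem_proj hF).one_sub
  have hR0 : 0 ≤ R := specNorm_nonneg _
  have hcR : c ≤ 1 - R ^ 2 := by nlinarith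
  have hz : (1 - proj XF) *ᵥ z = z := by rw [mulVec_mulVec, hQi.eq]
  have hcomp : (1 - R ^ 2) * Δ ^ 2 ≤ (1 - (1 - R ^ 2)) * (σ⁻¹ * nrm z) ^ 2 :=
    sq_waldStat_sub_waldStat_le hE (by linarith) (one_sub_sq_mul_nrm_sq_le_nrm_residual_sq hE hF)
      (fun v => by
        simpa only [mulVec_mulVec] using
          nrm_one_sub_mulVec_le (isSymm_proj XF) (isIdempotentElem_proj hF) (XE *ᵥ v))
      (by rw [transpose_residual_mulVec, hz]) σ j
  have hHY : waldStat ((1 - proj XF) * XE) σ Y j = waldStat ((1 - proj XF) * XE) σ z j := by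
    simp only [waldStat, transpose_residual_mulVec, hz, z]
  have hsq : (√c * |Δ|) ^ 2 ≤ (σ⁻¹ * (nrm z * R)) ^ 2 := by
    rw [mul_pow, sq_abs, Real.sq_sqrt hc.le]
    nlinarith [mul_le_mul_of_nonneg_right hcR (sq_nonneg Δ)]
  rw [waldStat_fromCols_inl hK, hHY, mul_assoc, mul_assoc, le_inv_mul_iff₀ (by positivity)]
  exact (pow_le_pow_iff_left₀ (by positivity)
    (mul_nonneg (inv_nonneg.2 hσ.le) (mul_nonneg (nrm_nonneg _) hR0)) two_ne_zero).mp hsq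

theorem abs_waldStat_fromCols_sub_waldStat_le
    (hK : Function.Injective (fromCols XE XF).mulVec) {c : ℝ} (hc : 0 < c)
    (hR : specNorm (proj XE * proj XF) ≤ 1 - c) {σ : ℝ} (hσ : 0 < σ) (Y : Fin n → ℝ) (j : m) :
    |waldStat (fromCols XE XF) σ Y (Sum.inl j) - waldStat XE σ Y j| ≤
      (√c)⁻¹ * σ⁻¹ * nrm Y * specNorm (proj XE * proj XF) + σ⁻¹ * nrm (proj XF *ᵥ Y) := by
  obtain ⟨hE, hF⟩ := injective_mulVec_of_fromCols hK
  have hmarg : |waldStat XE σ ((1 - proj XF) *ᵥ Y) j - waldStat XE σ Y j| ≤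
      σ⁻¹ * nrm (proj XF *ᵥ Y) := by
    rw [abs_sub_comm, waldStat_sub, sub_mulVec, one_mulVec, sub_sub_cancel]
    exact (abs_waldStat_le hE σ _ j).trans_eq (by rw [abs_of_pos (inv_pos.2 hσ)])
  calc _ ≤ _ := abs_sub_le _ (waldStat XE σ ((1 - proj XF) *ᵥ Y) j) _
    _ ≤ _ := add_le_add ((abs_waldStat_fromCols_sub_waldStat_residual_le hK hc hR hσ Y j).trans
        (by gcongr; exacts [specNorm_nonneg _,
          nrm_one_sub_mulVec_le (isSymm_proj XF) (isIdempotentElem_proj hF) Y])) hmarg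

end Approximation

/-- Approximation of the joint-regression Wald statistics by marginal ones, with a
constant depending only on c. -/
theorem stmt_11 (c : ℝ) (hc : 0 < c) :
    ∃ C : ℝ, 0 < C ∧
      ∀ (n a b : ℕ) (XE : Matrix (Fin n) (Fin a) ℝ) (XF : Matrix (Fin n) (Fin b) ℝ)
        (Y : Fin n → ℝ) (σ : ℝ), 0 < σ → Y ≠ 0 →
        (∀ j, ∑ i, XE i j = 0) → (∀ j, ∑ i, XF i j = 0) → (∑ i, Y i = 0) →
        (Matrix.fromCols XE XF).rank = a + b →
        specNorm (proj XE * proj XF) ≤ 1 - c →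
        (let XK := Matrix.fromCols XE XF
         let θK := (XKᵀ * XK)⁻¹ *ᵥ (XKᵀ *ᵥ Y)
         let TEF := fun j : Fin a =>
           σ⁻¹ * θK (Sum.inl j) / Real.sqrt (((XKᵀ * XK)⁻¹) (Sum.inl j) (Sum.inl j))
         let θE := (XEᵀ * XE)⁻¹ *ᵥ (XEᵀ *ᵥ Y)
         let TE := fun j : Fin a => σ⁻¹ * θE j / Real.sqrt (((XEᵀ * XE)⁻¹) j j)
         let Ytil := (1 - proj XF) *ᵥ Y
         let θEt := (XEᵀ * XE)⁻¹ *ᵥ (XEᵀ *ᵥ Ytil)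
         let TEt := fun j : Fin a => σ⁻¹ * θEt j / Real.sqrt (((XEᵀ * XE)⁻¹) j j)
         (∀ j, |TEF j - TE j| ≤ C * σ⁻¹ * nrm Y *
             (specNorm (proj XE * proj XF) + nrm (proj XF *ᵥ Y) / nrm Y)) ∧
         (∀ j, |TEF j - TEt j| ≤ C * σ⁻¹ * nrm Ytil * specNorm (proj XE * proj XF))) := by
  refine ⟨1 + (√c)⁻¹, by positivity, fun n a b XE XF Y σ hσ hY _ _ _ hrank hR => ?_⟩
  have hK : Function.Injective (fromCols XE XF).mulVec :=
    injective_mulVec_of_rank_eq_card (by simpa using hrank)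
  have hYpos : 0 < nrm Y := (nrm_nonneg Y).lt_of_ne' (nrm_eq_zero.not.mpr hY)
  have hσ' : 0 < σ⁻¹ := inv_pos.2 hσ
  have hC : (√c)⁻¹ ≤ 1 + (√c)⁻¹ := le_add_of_nonneg_left zero_le_one
  refine ⟨fun j => (abs_waldStat_fromCols_sub_waldStat_le hK hc hR hσ Y j).trans ?_,
    fun j => (abs_waldStat_fromCols_sub_waldStat_residual_le hK hc hR hσ Y j).trans ?_⟩
  · have hsplit : (1 + (√c)⁻¹) * σ⁻¹ * nrm Y *
          (specNorm (proj XE * proj XF) + nrm (proj XF *ᵥ Y) / nrm Y) =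
        (1 + (√c)⁻¹) * σ⁻¹ * nrm Y * specNorm (proj XE * proj XF) +
          (1 + (√c)⁻¹) * (σ⁻¹ * nrm (proj XF *ᵥ Y)) := by
      field_simp
    rw [hsplit]
    exact add_le_add (by gcongr; exact specNorm_nonneg _)
      (le_mul_of_one_le_left (mul_nonneg hσ'.le (nrm_nonneg _)) (by simp))
  · exact mul_le_mul_of_nonneg_right (mul_le_mul_of_nonneg_right
      (mul_le_mul_of_nonneg_right hC hσ'.le) (nrm_nonneg _)) (specNorm_nonneg _)
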